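/- Let S and T be tree modules of Q and let (S,U_S) and (T,U_T) be cells of Schurian representations. Suppose that Hom(T(μ),S(λ)) = 0 for all (λ,μ) ∈ U_S × U_T, and that R_{S,T} = {e_1, …, e_n} ⊆ R(S,T) is a universal tree-shaped basis for (U_T,U_S), i.e. it consists of standard basis vectors with respect to fixed tree bases of S and T and represents a basis of Ext(S(λ),T(μ)) for all (μ,λ) ∈ U_T × U_S. Then there exist tree modules B_1, …, B_n, namely the middle terms of the short exact sequences 0 → T → B_i → S → 0 determined by the e_i, and affine subspaces A_i ⊆ R(B_i,B_i) with dim A_i = i − 1 for i = 1,…,n, such that each (B_i,A_i) is a cell of indecomposable representations and the collection {(B_i,A_i) : i = 1,…,n} is a mosaic of indecomposable representations; in particular, every representation B_i(ν) with ν ∈ A_i is indecomposable, B_i(ν) ≅ B_i(ν') implies ν = ν', and B_i(ν) ≅ B_j(ν') implies i = j. -/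

import Mathlib

/-!
Because `Hom(T, S) = 0` and `End T = End S = k`, a morphism `B(f) → B(f')` between middle terms
of extensions `0 → T → B → S → 0` is upper triangular with scalar diagonal `(c_T, c_S)`, and its
corner `h` satisfies `d h = c_S f' - c_T f`. So `B(f)` is indecomposable as soon as `f` does not
split, and `B(f) ≅ B(f')` forces `c_S f' ≡ c_T f` in `Ext(S, T)` with `c_S, c_T ≠ 0`.
Take `A_i` to be the upper-right corners `g ∈ span {e_j : j < i}`, so that `B_i(g) = B(e_i + g)`:
since the classes of the `e_j` are linearly independent in `Ext(S, T)`, the coefficient of the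
leading term `e_i` rules out splitting and isomorphisms between different `i`, and the lower terms
then separate the points of `A_i`.
The coefficient quiver of `B(e_i)` in the union of the tree bases of `T` and `S` is the disjoint
union of the two trees joined by the single arrow of the standard vector `e_i`, hence a tree.
-/

namespace QuivRep

variable (k : Type) [Field k] {V A : Type} (s t : A → V)

/-- `RSp k s t X Y` is R(N,M) = ⊕_{a∈Q_1} Hom_k(N_{s(a)}, M_{t(a)}) where the
representation `N` has vertex spaces `X` and `M` has vertex spaces `Y`. -/
abbrev RSp (X Y : V → Type) [∀ q, AddCommGroup (X q)] [∀ q, Module k (X q)]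
    [∀ q, AddCommGroup (Y q)] [∀ q, Module k (Y q)] : Type :=
  ∀ a : A, X (s a) →ₗ[k] Y (t a)

variable {X Y : V → Type}
  [∀ q, AddCommGroup (X q)] [∀ q, Module k (X q)]
  [∀ q, AddCommGroup (Y q)] [∀ q, Module k (Y q)]

/-- The linear map `d_{N,M}` whose cokernel is Ext(N,M). Here `Nm` are the arrow
maps of `N` (on spaces `X`) and `Mm` those of `M` (on spaces `Y`). -/
def dMap (Nm : RSp k s t X X) (Mm : RSp k s t Y Y) :
    (∀ q, X q →ₗ[k] Y q) →ₗ[k] RSp k s t X Y where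
  toFun f := fun a => (f (t a)).comp (Nm a) - (Mm a).comp (f (s a))
  map_add' f g := by
    funext a; ext x
    simp only [Pi.add_apply, LinearMap.add_comp, LinearMap.comp_add, LinearMap.sub_apply,
      LinearMap.add_apply, LinearMap.comp_apply]
    abel
  map_smul' c f := by
    funext a; ext x
    simp [smul_sub]

/-- `f : M → N` is a morphism of representations (`M` on spaces `X`, `N` on spaces `Y`). -/
def IsRHom (Mm : RSp k s t X X) (Nm : RSp k s t Y Y) (f : ∀ q, X q →ₗ[k] Y q) : Prop :=
  ∀ a, (f (t a)).comp (Mm a) = (Nm a).comp (f (s a))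

/-- Isomorphism of representations. -/
def RIso (Mm : RSp k s t X X) (Nm : RSp k s t Y Y) : Prop :=
  ∃ f : ∀ q, X q →ₗ[k] Y q, IsRHom k s t Mm Nm f ∧ ∀ q, Function.Bijective (f q)

/-- A family of submodules is a subrepresentation. -/
def IsSubRep (Mm : RSp k s t X X) (U : ∀ q, Submodule k (X q)) : Prop :=
  ∀ a, ∀ x ∈ U (s a), Mm a x ∈ U (t a)

/-- Indecomposability: nonzero, and no nontrivial internal direct sum decomposition. -/
def Indec (Mm : RSp k s t X X) : Prop :=
  (∃ q, ∃ x : X q, x ≠ 0) ∧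
  ∀ U W : ∀ q, Submodule k (X q), IsSubRep k s t Mm U → IsSubRep k s t Mm W →
    (∀ q, U q ⊓ W q = ⊥) → (∀ q, U q ⊔ W q = ⊤) →
    (∀ q, U q = ⊥) ∨ (∀ q, W q = ⊥)

/-- The middle term `B(f,λ,μ)` of the extension determined by `f ∈ R(N,M)`:
vertex spaces `Y q × X q`, arrow maps `[[Mm, f],[0, Nm]]`. -/
def BExt (Mm : RSp k s t Y Y) (Nm : RSp k s t X X) (f : RSp k s t X Y) :
    RSp k s t (fun q => Y q × X q) (fun q => Y q × X q) :=
  fun a => LinearMap.prod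
    ((Mm a).comp (LinearMap.fst k (Y (s a)) (X (s a))) +
      (f a).comp (LinearMap.snd k (Y (s a)) (X (s a))))
    ((Nm a).comp (LinearMap.snd k (Y (s a)) (X (s a))))

/-- `U` is strong: every deformation `M(λ)`, `λ ∈ U`, is indecomposable. -/
def Strong (Mm : RSp k s t X X) (U : Set (RSp k s t X X)) : Prop :=
  ∀ lam ∈ U, Indec k s t (Mm + lam)

/-- `U` is separating: `M(λ) ≅ M(μ)` implies `λ = μ` for `λ, μ ∈ U`. -/
def Separating (Mm : RSp k s t X X) (U : Set (RSp k s t X X)) : Prop :=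
  ∀ lam ∈ U, ∀ mu ∈ U, RIso k s t (Mm + lam) (Mm + mu) → lam = mu

/-- `End(M) = k·id`. -/
def EndTrivial (Mm : RSp k s t X X) : Prop :=
  ∀ f : ∀ q, X q →ₗ[k] X q, IsRHom k s t Mm Mm f → ∃ c : k, ∀ q, f q = c • LinearMap.id

/-- `Hom(M,N) = 0`. -/
def HomZero (Mm : RSp k s t X X) (Nm : RSp k s t Y Y) : Prop :=
  ∀ f : ∀ q, X q →ₗ[k] Y q, IsRHom k s t Mm Nm f → f = 0

end QuivRep


open QuivRep

section Tree

variable {k : Type} [Field k] {V A : Type} [Fintype V] [Fintype A] [DecidableEq A]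
variable (s t : A → V)

variable {XS XT : V → Type}
  [∀ q, AddCommGroup (XS q)] [∀ q, Module k (XS q)] [∀ q, FiniteDimensional k (XS q)]
  [∀ q, AddCommGroup (XT q)] [∀ q, Module k (XT q)] [∀ q, FiniteDimensional k (XT q)]

/-- The coefficient-quiver adjacency (in either direction) on the vertex set
`Σ q, ι q` of a homogeneous basis. -/
def coeffAdj (Mm : RSp k s t XS XS) {ι : V → Type} (Bas : ∀ q, Module.Basis (ι q) k (XS q))
    (v w : Σ q, ι q) : Prop :=
  ∃ (a : A) (b' : ι (s a)) (b : ι (t a)),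
    ((Bas (t a)).repr ((Mm a) ((Bas (s a)) b'))) b ≠ 0 ∧
    ((v = ⟨s a, b'⟩ ∧ w = ⟨t a, b⟩) ∨ (w = ⟨s a, b'⟩ ∧ v = ⟨t a, b⟩))

/-- The underlying (simple) graph of the coefficient quiver. -/
def coeffGraph (Mm : RSp k s t XS XS) {ι : V → Type}
    (Bas : ∀ q, Module.Basis (ι q) k (XS q)) : SimpleGraph (Σ q, ι q) where
  Adj v w := v ≠ w ∧ coeffAdj s t Mm Bas v w
  symm := ⟨by
    rintro v w ⟨hne, a, b', b, hc, h⟩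
    exact ⟨hne.symm, a, b', b, hc, h.symm⟩⟩
  loopless := ⟨fun v h => h.1 rfl⟩

/-- `Bas` is a tree basis: the coefficient quiver is connected and has exactly one
fewer arrow than it has vertices. -/
def IsTreeBasis (Mm : RSp k s t XS XS) {ι : V → Type}
    (Bas : ∀ q, Module.Basis (ι q) k (XS q)) : Prop :=
  (coeffGraph s t Mm Bas).Connected ∧
  Nat.card {p : (a : A) × ι (s a) × ι (t a) //
      ((Bas (t p.1)).repr ((Mm p.1) ((Bas (s p.1)) p.2.1))) p.2.2 ≠ 0} + 1 =
    Nat.card (Σ q, ι q)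

/-- A tree module: an indecomposable representation admitting a tree basis. -/
def IsTreeModule (Mm : RSp k s t XS XS) : Prop :=
  Indec k s t Mm ∧
  ∃ (ι : V → Type) (Bas : ∀ q, Module.Basis (ι q) k (XS q)), IsTreeBasis s t Mm Bas

/-- The standard basis vector of `R(S,T)` (w.r.t. homogeneous bases of `S` and `T`)
supported at the arrow `a0`, sending the basis vector `b'` of `S_{s(a0)}` to the basis
vector `b` of `T_{t(a0)}`. -/
noncomputable def stdVec {ιS ιT : V → Type}
    (BasS : ∀ q, Module.Basis (ιS q) k (XS q)) (BasT : ∀ q, Module.Basis (ιT q) k (XT q))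
    (a0 : A) (b' : ιS (s a0)) (b : ιT (t a0)) : RSp k s t XS XT :=
  fun a =>
    if h : a = a0 then by
      subst h
      classical
      exact (BasS (s a)).constr k (fun c => if c = b' then (BasT (t a)) b else 0)
    else 0

end Tree

section Flag

variable {k M : Type*} [Field k] [AddCommGroup M] [Module k M] {n : ℕ} {e : Fin n → M}
  {p : Submodule k M}

theorem finrank_span_image_Iio (he : LinearIndependent k e) (i : Fin n) :
    Module.finrank k (Submodule.span k (e '' Set.Iio i)) = i := by
  rw [Set.image_eq_range]
  exact (finrank_span_eq_card (he.comp _ Subtype.val_injective)).trans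
    ((Fintype.card_Iio i).trans (Fin.card_Iio i))

theorem eq_zero_of_smul_add_mem (he : LinearIndependent k (p.mkQ ∘ e)) {i : Fin n} {c : k}
    {x : M} (hx : x ∈ Submodule.span k (e '' Set.Iio i)) (h : c • e i + x ∈ p) :
    c = 0 ∧ x = 0 := by
  have hc : c = 0 := by
    by_contra hc
    apply he.notMem_span_image (s := Set.Iio i) (x := i) (lt_irrefl i)
    have hq : p.mkQ (e i) = -c⁻¹ • p.mkQ x := by
      rw [← Submodule.Quotient.mk_eq_zero, ← Submodule.mkQ_apply, map_add, map_smul] at h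
      rw [neg_smul, eq_neg_iff_add_eq_zero, ← smul_eq_zero_iff_right hc, smul_add, smul_smul,
        mul_inv_cancel₀ hc, one_smul, h]
    rw [Function.comp_apply, hq, Set.image_comp, ← Submodule.map_span]
    exact Submodule.smul_mem _ _ (Submodule.mem_map_of_mem hx)
  subst hc
  refine ⟨rfl, (Submodule.disjoint_def.mp (Submodule.range_ker_disjoint he)) x
    (Submodule.span_mono (Set.image_subset_range _ _) hx) ?_⟩
  simpa using h

variable (he : LinearIndependent k (p.mkQ ∘ e))
include he

theorem add_notMem_of_mem_span_Iio {i : Fin n} {g : M}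
    (hg : g ∈ Submodule.span k (e '' Set.Iio i)) : e i + g ∉ p := fun h =>
  one_ne_zero (eq_zero_of_smul_add_mem he hg (by rwa [one_smul])).1

theorem eq_of_smul_add_sub_mem {i : Fin n} {c : k} {g g' : M}
    (hg : g ∈ Submodule.span k (e '' Set.Iio i)) (hg' : g' ∈ Submodule.span k (e '' Set.Iio i))
    (h : c • e i + (g - g') ∈ p) : g = g' :=
  sub_eq_zero.mp (eq_zero_of_smul_add_mem he (Submodule.sub_mem _ hg hg') h).2

theorem eq_and_eq_of_smul_sub_smul_mem {i j : Fin n} {c c' : k} {g g' : M} (hc : c ≠ 0)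
    (hc' : c' ≠ 0) (hg : g ∈ Submodule.span k (e '' Set.Iio i))
    (hg' : g' ∈ Submodule.span k (e '' Set.Iio j)) (h : c' • (e j + g') - c • (e i + g) ∈ p) :
    i = j ∧ g = g' := by
  wlog hij : i ≤ j generalizing i j c c' g g'
  · obtain ⟨rfl, rfl⟩ :=
      this hc' hc hg' hg (by rw [← neg_sub]; exact p.neg_mem h) (le_of_not_ge hij)
    exact ⟨rfl, rfl⟩
  have mem_span_Iio {l : Fin n} (hl : l < j) : e l ∈ Submodule.span k (e '' Set.Iio j) :=
    Submodule.subset_span (Set.mem_image_of_mem e hl)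
  rcases hij.lt_or_eq with hlt | rfl
  · refine absurd (eq_zero_of_smul_add_mem he (i := j) (c := c') (x := c' • g' - c • (e i + g))
      ?_ ?_).1 hc'
    · refine Submodule.sub_mem _ (Submodule.smul_mem _ _ hg') (Submodule.smul_mem _ _ ?_)
      exact Submodule.add_mem _ (mem_span_Iio hlt)
        (Submodule.span_mono (Set.image_mono (Set.Iio_subset_Iio hlt.le)) hg)
    · convert h using 1
      module
  · obtain ⟨hcc, hgg⟩ := eq_zero_of_smul_add_mem he (c := c' - c) (x := c' • g' - c • g)
      (Submodule.sub_mem _ (Submodule.smul_mem _ _ hg') (Submodule.smul_mem _ _ hg))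
      (by convert h using 1; module)
    rw [sub_eq_zero] at hcc hgg
    subst hcc
    exact ⟨rfl, (smul_right_injective M hc hgg).symm⟩

end Flag

namespace QuivRep

variable {k : Type} [Field k] {V A : Type} {s t : A → V}

section Representations

variable {X Y : V → Type} [∀ q, AddCommGroup (X q)] [∀ q, Module k (X q)]
  [∀ q, AddCommGroup (Y q)] [∀ q, Module k (Y q)]

theorem isRHom_iff_dMap_eq_zero {Mm : RSp k s t X X} {Nm : RSp k s t Y Y}
    {f : ∀ q, X q →ₗ[k] Y q} : IsRHom k s t Mm Nm f ↔ dMap k s t Mm Nm f = 0 := by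
  simp only [IsRHom, funext_iff, dMap, LinearMap.coe_mk, AddHom.coe_mk, Pi.zero_apply,
    sub_eq_zero]

theorem isRHom_projection {Mm : RSp k s t X X} {U W : ∀ q, Submodule k (X q)}
    (hU : IsSubRep k s t Mm U) (hW : IsSubRep k s t Mm W) (hUW : ∀ q, IsCompl (U q) (W q)) :
    IsRHom k s t Mm Mm fun q => (U q).projection (W q) (hUW q) := by
  intro a
  ext x
  obtain ⟨u, hu, w, hw, rfl⟩ :=
    Submodule.mem_sup.mp ((hUW (s a)).sup_eq_top ▸ Submodule.mem_top (x := x))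
  simp [Submodule.projection_apply_of_mem_left _ hu, Submodule.projection_apply_of_mem_right _ hw,
    Submodule.projection_apply_of_mem_left _ (hU a u hu),
    Submodule.projection_apply_of_mem_right _ (hW a w hw)]

theorem indec_of_isIdempotentElem {Mm : RSp k s t X X} (hne : ∃ q, ∃ x : X q, x ≠ 0)
    (h : ∀ φ : ∀ q, Module.End k (X q), IsRHom k s t Mm Mm φ → (∀ q, IsIdempotentElem (φ q)) →
      φ = 0 ∨ φ = 1) :
    Indec k s t Mm := by
  refine ⟨hne, fun U W hU hW hinf hsup => ?_⟩
  have hUW q : IsCompl (U q) (W q) := ⟨disjoint_iff.mpr (hinf q), codisjoint_iff.mpr (hsup q)⟩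
  rcases h _ (isRHom_projection hU hW hUW) fun q => Submodule.isIdempotentElem_projection _ with
    h0 | h1
  · left
    intro q
    rw [← Submodule.range_projection (hUW q), congrFun h0 q]
    exact LinearMap.range_zero
  · right
    intro q
    rw [← Submodule.ker_projection (hUW q), congrFun h1 q]
    exact LinearMap.ker_id

end Representations

section Extensions

variable {XS XT : V → Type} [∀ q, AddCommGroup (XS q)] [∀ q, Module k (XS q)]
  [∀ q, AddCommGroup (XT q)] [∀ q, Module k (XT q)]

@[simp]
theorem BExt_apply (Tm : RSp k s t XT XT) (Sm : RSp k s t XS XS) (f : RSp k s t XS XT) (a : A)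
    (p : XT (s a) × XS (s a)) : BExt k s t Tm Sm f a p = (Tm a p.1 + f a p.2, Sm a p.2) :=
  rfl

def blockUpperRight :
    RSp k s t XS XT →ₗ[k] RSp k s t (fun q => XT q × XS q) (fun q => XT q × XS q) where
  toFun g a := LinearMap.inl k _ _ ∘ₗ g a ∘ₗ LinearMap.snd k _ _
  map_add' g g' := by ext <;> simp
  map_smul' c g := by ext <;> simp

@[simp]
theorem blockUpperRight_apply (g : RSp k s t XS XT) (a : A) (p : XT (s a) × XS (s a)) :
    blockUpperRight g a p = (g a p.2, 0) :=
  rfl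

theorem blockUpperRight_injective :
    Function.Injective (blockUpperRight : RSp k s t XS XT → _) := by
  intro g g' h
  ext a x
  simpa using congr(($h a (0, x)).1)

theorem BExt_add_blockUpperRight (Tm : RSp k s t XT XT) (Sm : RSp k s t XS XS)
    (f g : RSp k s t XS XT) :
    BExt k s t Tm Sm f + blockUpperRight g = BExt k s t Tm Sm (f + g) := by
  ext <;> simp

section Blocks

variable {Tm : RSp k s t XT XT} {Sm : RSp k s t XS XS} (hHom : HomZero k s t Tm Sm)
  (hT : EndTrivial k s t Tm) (hS : EndTrivial k s t Sm)
include hHom hT hS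

theorem exists_blocks_of_dMap_BExt_eq {f f' g : RSp k s t XS XT} {φ : ∀ q, (XT q × XS q) →ₗ[k] (XT q × XS q)}
    (hφ : dMap k s t (BExt k s t Tm Sm f) (BExt k s t Tm Sm f') φ = blockUpperRight g) :
    ∃ (cT cS : k) (h : ∀ q, XS q →ₗ[k] XT q),
      (∀ q y x, φ q (y, x) = (cT • y + h q x, cS • x)) ∧
      dMap k s t Sm Tm h = g + cS • f' - cT • f := by
  have key a p : φ (t a) (BExt k s t Tm Sm f a p) =
      BExt k s t Tm Sm f' a (φ (s a) p) + (g a p.2, 0) := by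
    rw [← blockUpperRight_apply, ← hφ]
    simp [dMap]
  set φ11 : ∀ q, XT q →ₗ[k] XT q := fun q => LinearMap.fst k _ _ ∘ₗ φ q ∘ₗ LinearMap.inl k _ _
  set φ21 : ∀ q, XT q →ₗ[k] XS q := fun q => LinearMap.snd k _ _ ∘ₗ φ q ∘ₗ LinearMap.inl k _ _
  set φ12 : ∀ q, XS q →ₗ[k] XT q := fun q => LinearMap.fst k _ _ ∘ₗ φ q ∘ₗ LinearMap.inr k _ _
  set φ22 : ∀ q, XS q →ₗ[k] XS q := fun q => LinearMap.snd k _ _ ∘ₗ φ q ∘ₗ LinearMap.inr k _ _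
  -- In block form `key` says: `φ21 : T → S` is a morphism, hence zero, and then `φ11`, `φ22`
  -- are endomorphisms of `T` and `S`.
  have hφ q y x : φ q (y, x) = (φ11 q y + φ12 q x, φ21 q y + φ22 q x) := by
    rw [← LinearMap.coprod_comp_inl_inr (φ q)]
    rfl
  have h21 : φ21 = 0 := hHom φ21 fun a => by
    ext y
    simpa [hφ] using congr(($(key a (y, 0))).2)
  obtain ⟨cT, hcT⟩ := hT φ11 fun a => by
    ext y
    simpa [hφ, h21] using congr(($(key a (y, 0))).1)
  obtain ⟨cS, hcS⟩ := hS φ22 fun a => by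
    ext x
    simpa [hφ, h21] using congr(($(key a (0, x))).2)
  refine ⟨cT, cS, φ12, fun q y x => by simp [hφ, hcT, hcS, h21], ?_⟩
  ext a x
  have := congr(($(key a (0, x))).1)
  simp only [hφ, hcT, hcS, h21, BExt_apply, Pi.zero_apply, LinearMap.zero_apply, map_zero,
    LinearMap.smul_apply, LinearMap.id_apply, zero_add, map_smul, Prod.fst_add] at this
  simp only [dMap, LinearMap.coe_mk, AddHom.coe_mk, Pi.add_apply, Pi.sub_apply, Pi.smul_apply,
    LinearMap.add_apply, LinearMap.sub_apply, LinearMap.smul_apply, LinearMap.comp_apply]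
  linear_combination (norm := module) this

theorem exists_blocks_of_isRHom_BExt {f f' : RSp k s t XS XT}
    {φ : ∀ q, (XT q × XS q) →ₗ[k] (XT q × XS q)}
    (hφ : IsRHom k s t (BExt k s t Tm Sm f) (BExt k s t Tm Sm f') φ) :
    ∃ (cT cS : k) (h : ∀ q, XS q →ₗ[k] XT q),
      (∀ q y x, φ q (y, x) = (cT • y + h q x, cS • x)) ∧
      dMap k s t Sm Tm h = cS • f' - cT • f := by
  simpa using exists_blocks_of_dMap_BExt_eq hHom hT hS (g := 0)
    (by rwa [map_zero, ← isRHom_iff_dMap_eq_zero])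

/-- The two diagonal scalars of an endomorphism agree because `f` does not split; an idempotent
`c • 1 + h` (`h` the upper-right corner) then has `c ^ 2 = c` and `(2 c - 1) • h = 0`, where
`(2 c - 1) ^ 2 = 1`. -/
theorem indec_BExt_of_notMem_range (hTne : ∃ q, ∃ y : XT q, y ≠ 0) {f : RSp k s t XS XT}
    (hf : f ∉ LinearMap.range (dMap k s t Sm Tm)) : Indec k s t (BExt k s t Tm Sm f) := by
  obtain ⟨q0, y0, hy0⟩ := hTne
  refine indec_of_isIdempotentElem ⟨q0, (y0, 0), by simp [hy0]⟩ fun φ hφ hidem => ?_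
  obtain ⟨cT, c, h, hφ_apply, hd⟩ := exists_blocks_of_isRHom_BExt hHom hT hS hφ
  obtain rfl : c = cT := by
    by_contra hne
    refine hf ⟨(c - cT)⁻¹ • h, ?_⟩
    rw [map_smul, hd, ← sub_smul, smul_smul, inv_mul_cancel₀ (sub_ne_zero.mpr hne), one_smul]
  have hidem_apply q y x : φ q (φ q (y, x)) = φ q (y, x) := congr($(hidem q) (y, x))
  have hc : IsIdempotentElem c := by
    have := congr(($(hidem_apply q0 y0 0)).1)
    simp only [hφ_apply, map_zero, smul_zero, add_zero, smul_smul] at this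
    exact smul_left_injective k hy0 this
  have hh q x : h q x = 0 := by
    have := congr(($(hidem_apply q 0 x)).1)
    simp only [hφ_apply, smul_zero, zero_add, map_smul, ← two_smul k, smul_smul] at this
    have hunit : (2 * c - 1) * (2 * c - 1) = 1 := by linear_combination 4 * hc.eq
    have h2 : (2 * c - 1) • h q x = 0 := by rw [sub_smul, this, one_smul, sub_self]
    simpa [smul_smul, hunit] using congr((2 * c - 1) • $h2)
  rcases IsIdempotentElem.iff_eq_zero_or_one.mp hc with rfl | rfl
  · left
    ext q y <;> simp [hφ_apply, hh]
  · right
    ext q y <;> simp [hφ_apply, hh]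

theorem exists_smul_sub_smul_mem_range_of_rIso (hTne : ∃ q, ∃ y : XT q, y ≠ 0)
    (hSne : ∃ q, ∃ x : XS q, x ≠ 0) {f f' : RSp k s t XS XT}
    (hiso : RIso k s t (BExt k s t Tm Sm f) (BExt k s t Tm Sm f')) :
    ∃ cT cS : k, cT ≠ 0 ∧ cS ≠ 0 ∧ cS • f' - cT • f ∈ LinearMap.range (dMap k s t Sm Tm) := by
  obtain ⟨φ, hφ, hbij⟩ := hiso
  obtain ⟨cT, cS, h, hφ_apply, hd⟩ := exists_blocks_of_isRHom_BExt hHom hT hS hφ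
  refine ⟨cT, cS, ?_, ?_, h, hd⟩
  · rintro rfl
    obtain ⟨q, y, hy⟩ := hTne
    have : φ q (y, 0) = φ q 0 := by simp [hφ_apply]
    simpa [hy] using (hbij q).1 this
  · rintro rfl
    obtain ⟨q, x, hx⟩ := hSne
    obtain ⟨p, hp⟩ := (hbij q).2 (0, x)
    simpa [hφ_apply, eq_comm, hx] using congr(($hp).2)

variable {n : ℕ} {e : Fin n → RSp k s t XS XT}
  (he : LinearIndependent k ((LinearMap.range (dMap k s t Sm Tm)).mkQ ∘ e))
include he

theorem indec_BExt_add_blockUpperRight (hTne : ∃ q, ∃ y : XT q, y ≠ 0) {i : Fin n}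
    {g : RSp k s t XS XT} (hg : g ∈ Submodule.span k (e '' Set.Iio i)) :
    Indec k s t (BExt k s t Tm Sm (e i) + blockUpperRight g) := by
  rw [BExt_add_blockUpperRight]
  exact indec_BExt_of_notMem_range hHom hT hS hTne (add_notMem_of_mem_span_Iio he hg)

theorem eq_of_sub_mem_range_dMap_BExt {i : Fin n} {g g' : RSp k s t XS XT}
    (hg : g ∈ Submodule.span k (e '' Set.Iio i)) (hg' : g' ∈ Submodule.span k (e '' Set.Iio i))
    (h : blockUpperRight g - blockUpperRight g' ∈
      LinearMap.range (dMap k s t (BExt k s t Tm Sm (e i)) (BExt k s t Tm Sm (e i)))) :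
    g = g' := by
  obtain ⟨φ, hφ⟩ := h
  rw [← map_sub] at hφ
  obtain ⟨cT, cS, h, -, hd⟩ := exists_blocks_of_dMap_BExt_eq hHom hT hS hφ
  refine eq_of_smul_add_sub_mem he (c := cS - cT) hg hg' ⟨h, ?_⟩
  rw [hd]
  module

theorem eq_and_eq_of_rIso_BExt_add_blockUpperRight (hTne : ∃ q, ∃ y : XT q, y ≠ 0)
    (hSne : ∃ q, ∃ x : XS q, x ≠ 0) {i j : Fin n} {g g' : RSp k s t XS XT}
    (hg : g ∈ Submodule.span k (e '' Set.Iio i)) (hg' : g' ∈ Submodule.span k (e '' Set.Iio j))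
    (h : RIso k s t (BExt k s t Tm Sm (e i) + blockUpperRight g)
      (BExt k s t Tm Sm (e j) + blockUpperRight g')) :
    i = j ∧ g = g' := by
  rw [BExt_add_blockUpperRight, BExt_add_blockUpperRight] at h
  obtain ⟨cT, cS, hcT, hcS, hmem⟩ :=
    exists_smul_sub_smul_mem_range_of_rIso hHom hT hS hTne hSne h
  exact eq_and_eq_of_smul_sub_smul_mem he hcT hcS hg hg' hmem

end Blocks

end Extensions

section CoefficientQuiver

variable {X Y : V → Type} [∀ q, AddCommGroup (X q)] [∀ q, Module k (X q)]
  [∀ q, AddCommGroup (Y q)] [∀ q, Module k (Y q)] {ιX ιY : V → Type}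

def coeffSupport (Mm : RSp k s t X Y) (BasX : ∀ q, Module.Basis (ιX q) k (X q))
    (BasY : ∀ q, Module.Basis (ιY q) k (Y q)) : Set ((a : A) × ιX (s a) × ιY (t a)) :=
  {p | (BasY (t p.1)).repr (Mm p.1 (BasX (s p.1) p.2.1)) p.2.2 ≠ 0}

def arrowMap {ι₁ ι₂ κ₁ κ₂ : V → Type} (j₁ : ∀ q, ι₁ q → κ₁ q) (j₂ : ∀ q, ι₂ q → κ₂ q)
    (p : (a : A) × ι₁ (s a) × ι₂ (t a)) : (a : A) × κ₁ (s a) × κ₂ (t a) :=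
  Sigma.map id (fun a => Prod.map (j₁ (s a)) (j₂ (t a))) p

@[simp]
theorem arrowMap_apply {ι₁ ι₂ κ₁ κ₂ : V → Type} (j₁ : ∀ q, ι₁ q → κ₁ q) (j₂ : ∀ q, ι₂ q → κ₂ q)
    (p : (a : A) × ι₁ (s a) × ι₂ (t a)) : arrowMap j₁ j₂ p = ⟨p.1, j₁ _ p.2.1, j₂ _ p.2.2⟩ :=
  rfl

theorem mk_mem_image_arrowMap_iff {ι₁ ι₂ κ₁ κ₂ : V → Type} {j₁ : ∀ q, ι₁ q → κ₁ q}
    {j₂ : ∀ q, ι₂ q → κ₂ q} {S : Set ((a : A) × ι₁ (s a) × ι₂ (t a))} {a : A} {x : κ₁ (s a)}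
    {y : κ₂ (t a)} :
    ⟨a, x, y⟩ ∈ arrowMap j₁ j₂ '' S ↔ ∃ x' y', j₁ _ x' = x ∧ j₂ _ y' = y ∧ ⟨a, x', y'⟩ ∈ S := by
  constructor
  · rintro ⟨⟨a', x', y'⟩, hS, he⟩
    obtain ⟨rfl, he⟩ := Sigma.mk.inj_iff.mp he
    obtain ⟨rfl, rfl⟩ := Prod.mk.inj (eq_of_heq he)
    exact ⟨x', y', rfl, rfl, hS⟩
  · rintro ⟨x', y', rfl, rfl, hS⟩
    exact ⟨_, hS, rfl⟩

theorem arrowMap_injective {ι₁ ι₂ κ₁ κ₂ : V → Type} {j₁ : ∀ q, ι₁ q → κ₁ q}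
    {j₂ : ∀ q, ι₂ q → κ₂ q} (hj₁ : ∀ q, Function.Injective (j₁ q))
    (hj₂ : ∀ q, Function.Injective (j₂ q)) :
    Function.Injective (arrowMap (s := s) (t := t) j₁ j₂) :=
  Function.injective_id.sigma_map fun a => (hj₁ (s a)).prodMap (hj₂ (t a))

theorem coeffGraph_adj_of_mem_coeffSupport {Mm : RSp k s t X X}
    {Bas : ∀ q, Module.Basis (ιX q) k (X q)} {p : (a : A) × ιX (s a) × ιX (t a)}
    (hp : p ∈ coeffSupport Mm Bas Bas) (hne : (⟨s p.1, p.2.1⟩ : Σ q, ιX q) ≠ ⟨t p.1, p.2.2⟩) :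
    (coeffGraph s t Mm Bas).Adj ⟨s p.1, p.2.1⟩ ⟨t p.1, p.2.2⟩ :=
  ⟨hne, p.1, p.2.1, p.2.2, hp, Or.inl ⟨rfl, rfl⟩⟩

theorem coeffGraph_reachable_of_mapsTo {Mm : RSp k s t X X} {Nm : RSp k s t Y Y}
    {BasX : ∀ q, Module.Basis (ιX q) k (X q)} {BasY : ∀ q, Module.Basis (ιY q) k (Y q)}
    {j : ∀ q, ιX q → ιY q} (hj : ∀ q, Function.Injective (j q))
    (hmaps : Set.MapsTo (arrowMap j j) (coeffSupport Mm BasX BasX) (coeffSupport Nm BasY BasY))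
    (hM : (coeffGraph s t Mm BasX).Preconnected) (v w : Σ q, ιX q) :
    (coeffGraph s t Nm BasY).Reachable ⟨v.1, j _ v.2⟩ ⟨w.1, j _ w.2⟩ := by
  refine SimpleGraph.Reachable.map (G' := coeffGraph s t Nm BasY)
    ⟨fun v => (⟨v.1, j _ v.2⟩ : Σ q, ιY q), ?_⟩ (hM v w)
  rintro v w ⟨hne, a, b', b, hc, hor⟩
  refine ⟨(Function.injective_id.sigma_map hj).ne hne, a, j _ b', j _ b, @hmaps ⟨a, b', b⟩ hc, ?_⟩
  rcases hor with ⟨rfl, rfl⟩ | ⟨rfl, rfl⟩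
  exacts [Or.inl ⟨rfl, rfl⟩, Or.inr ⟨rfl, rfl⟩]

theorem isTreeBasis_iff {Mm : RSp k s t X X} {Bas : ∀ q, Module.Basis (ιX q) k (X q)} :
    IsTreeBasis s t Mm Bas ↔
      (coeffGraph s t Mm Bas).Connected ∧
        (coeffSupport Mm Bas Bas).ncard + 1 = Nat.card (Σ q, ιX q) :=
  Iff.rfl

end CoefficientQuiver

section ExtensionTree

variable {XS XT : V → Type} [∀ q, AddCommGroup (XS q)] [∀ q, Module k (XS q)]
  [∀ q, AddCommGroup (XT q)] [∀ q, Module k (XT q)] {ιS ιT : V → Type}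
  {Tm : RSp k s t XT XT} {Sm : RSp k s t XS XS} {f : RSp k s t XS XT}
  {BasT : ∀ q, Module.Basis (ιT q) k (XT q)} {BasS : ∀ q, Module.Basis (ιS q) k (XS q)}

theorem coeffSupport_BExt :
    coeffSupport (BExt k s t Tm Sm f) (fun q => (BasT q).prod (BasS q))
        (fun q => (BasT q).prod (BasS q)) =
      arrowMap (fun _ => Sum.inl) (fun _ => Sum.inl) '' coeffSupport Tm BasT BasT ∪
      arrowMap (fun _ => Sum.inr) (fun _ => Sum.inr) '' coeffSupport Sm BasS BasS ∪
      arrowMap (fun _ => Sum.inr) (fun _ => Sum.inl) '' coeffSupport f BasS BasT := by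
  ext ⟨a, c0 | c0, c1 | c1⟩ <;>
    simp only [Set.mem_union, mk_mem_image_arrowMap_iff] <;> simp [coeffSupport]

theorem ncard_coeffSupport_BExt [Finite A] [∀ q, Finite (ιT q)] [∀ q, Finite (ιS q)] :
    (coeffSupport (BExt k s t Tm Sm f) (fun q => (BasT q).prod (BasS q))
        (fun q => (BasT q).prod (BasS q))).ncard =
      (coeffSupport Tm BasT BasT).ncard + (coeffSupport Sm BasS BasS).ncard +
        (coeffSupport f BasS BasT).ncard := by
  have hinl q := Sum.inl_injective (α := ιT q) (β := ιS q)
  have hinr q := Sum.inr_injective (α := ιT q) (β := ιS q)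
  rw [coeffSupport_BExt, Set.ncard_union_eq, Set.ncard_union_eq,
    Set.ncard_image_of_injective _ (arrowMap_injective hinl hinl),
    Set.ncard_image_of_injective _ (arrowMap_injective hinr hinr),
    Set.ncard_image_of_injective _ (arrowMap_injective hinr hinl)]
  all_goals
    refine Set.disjoint_left.mpr ?_
    rintro ⟨a, x, y⟩ h h'
    simp only [Set.mem_union, mk_mem_image_arrowMap_iff] at h h'
    obtain ⟨x', y', rfl, rfl, -⟩ := h'
    simp at h

theorem connected_coeffGraph_BExt (hT : (coeffGraph s t Tm BasT).Connected)
    (hS : (coeffGraph s t Sm BasS).Connected) {p : (a : A) × ιS (s a) × ιT (t a)}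
    (hp : p ∈ coeffSupport f BasS BasT) :
    (coeffGraph s t (BExt k s t Tm Sm f) fun q => (BasT q).prod (BasS q)).Connected := by
  have hsupp := coeffSupport_BExt (Tm := Tm) (Sm := Sm) (f := f) (BasT := BasT) (BasS := BasS)
  have reachT := coeffGraph_reachable_of_mapsTo (fun q => Sum.inl_injective)
    (fun x hx => by rw [hsupp]; exact Or.inl (Or.inl ⟨x, hx, rfl⟩)) hT.preconnected
  have reachS := coeffGraph_reachable_of_mapsTo (fun q => Sum.inr_injective)
    (fun x hx => by rw [hsupp]; exact Or.inl (Or.inr ⟨x, hx, rfl⟩)) hS.preconnected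
  have hbridge := coeffGraph_adj_of_mem_coeffSupport
    (p := arrowMap (fun _ => Sum.inr) (fun _ => Sum.inl) p)
    (by rw [hsupp]; exact Set.mem_union_right _ (Set.mem_image_of_mem _ hp))
    fun h => by simpa using congr(($h).2.isLeft)
  refine (SimpleGraph.connected_iff _).mpr ⟨?_, ⟨⟨s p.1, Sum.inr p.2.1⟩⟩⟩
  rintro ⟨q, c | c⟩ ⟨q', c' | c'⟩
  · exact reachT ⟨q, c⟩ ⟨q', c'⟩
  · exact (reachT ⟨q, c⟩ ⟨_, p.2.2⟩).trans
      (hbridge.symm.reachable.trans (reachS ⟨_, p.2.1⟩ ⟨q', c'⟩))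
  · exact (reachS ⟨q, c⟩ ⟨_, p.2.1⟩).trans
      (hbridge.reachable.trans (reachT ⟨_, p.2.2⟩ ⟨q', c'⟩))
  · exact reachS ⟨q, c⟩ ⟨q', c'⟩

theorem isTreeBasis_BExt [Finite V] [Finite A] [∀ q, Finite (ιT q)] [∀ q, Finite (ιS q)]
    (hT : IsTreeBasis s t Tm BasT) (hS : IsTreeBasis s t Sm BasS)
    (hf : (coeffSupport f BasS BasT).ncard = 1) :
    IsTreeBasis s t (BExt k s t Tm Sm f) fun q => (BasT q).prod (BasS q) := by
  rw [isTreeBasis_iff] at hT hS ⊢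
  obtain ⟨p, hp⟩ := Set.ncard_eq_one.mp hf
  refine ⟨connected_coeffGraph_BExt hT.1 hS.1 (hp ▸ rfl : p ∈ _), ?_⟩
  rw [ncard_coeffSupport_BExt, hf, Nat.card_congr (Equiv.sigmaSumDistrib ιT ιS), Nat.card_sum,
    ← hT.2, ← hS.2]
  omega

theorem coeffSupport_stdVec [DecidableEq A] (a0 : A) (b' : ιS (s a0)) (b : ιT (t a0)) :
    coeffSupport (stdVec s t BasS BasT a0 b' b) BasS BasT = {⟨a0, b', b⟩} := by
  ext ⟨a, c0, c1⟩
  by_cases ha : a = a0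
  · subst ha
    by_cases hc0 : c0 = b' <;> by_cases hc1 : c1 = b <;>
      simp [coeffSupport, stdVec, Module.Basis.constr_basis, hc0, hc1]
  · simp [coeffSupport, stdVec, ha]

end ExtensionTree

end QuivRep

section Tree

variable {k : Type} [Field k] {V A : Type} [Fintype V] [Fintype A] [DecidableEq A]
variable (s t : A → V)

variable {XS XT : V → Type}
  [∀ q, AddCommGroup (XS q)] [∀ q, Module k (XS q)] [∀ q, FiniteDimensional k (XS q)]
  [∀ q, AddCommGroup (XT q)] [∀ q, Module k (XT q)] [∀ q, FiniteDimensional k (XT q)]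

theorem statement10
    {ιS ιT : V → Type}
    (Sm : RSp k s t XS XS) (Tm : RSp k s t XT XT)
    (BasS : ∀ q, Module.Basis (ιS q) k (XS q)) (BasT : ∀ q, Module.Basis (ιT q) k (XT q))
    (hStree : Indec k s t Sm ∧ IsTreeBasis s t Sm BasS)
    (hTtree : Indec k s t Tm ∧ IsTreeBasis s t Tm BasT)
    (US : Submodule k (RSp k s t XS XS)) (UT : Submodule k (RSp k s t XT XT))
    -- (S, U_S) is a cell of Schurian representations
    (hSchurS : ∀ lam ∈ US, EndTrivial k s t (Sm + lam))
    -- (T, U_T) is a cell of Schurian representations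
    (hSchurT : ∀ mu ∈ UT, EndTrivial k s t (Tm + mu))
    -- Hom(T(μ), S(λ)) = 0 for all (λ,μ) ∈ U_S × U_T
    (hHom : ∀ lam ∈ US, ∀ mu ∈ UT, HomZero k s t (Tm + mu) (Sm + lam))
    -- R_{S,T} = {e_1,…,e_n} is a universal tree-shaped basis for (U_T, U_S)
    (n : ℕ) (e : Fin n → RSp k s t XS XT)
    (hstd : ∀ i, ∃ (a0 : A) (b' : ιS (s a0)) (b : ιT (t a0)),
      e i = stdVec s t BasS BasT a0 b' b)
    (hbasis : ∀ lam ∈ US, ∀ mu ∈ UT,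
      LinearIndependent k (fun i => Submodule.Quotient.mk
        (p := LinearMap.range (dMap k s t (Sm + lam) (Tm + mu))) (e i)) ∧
      Submodule.span k (Set.range (fun i => Submodule.Quotient.mk
        (p := LinearMap.range (dMap k s t (Sm + lam) (Tm + mu))) (e i))) = ⊤) :
    ∃ (W : Fin n → Submodule k
        (RSp k s t (fun q => XT q × XS q) (fun q => XT q × XS q)))
      (v : Fin n → RSp k s t (fun q => XT q × XS q) (fun q => XT q × XS q)),
      ∀ i : Fin n,
        -- B_i is a tree module
        IsTreeModule s t (BExt k s t Tm Sm (e i)) ∧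
        -- A_i := v i + W i is an affine subspace of dimension i − 1 (= i.val)
        Module.finrank k (W i) = (i : ℕ) ∧
        -- A_i represents a subset of Ext(B_i, B_i)
        (∀ nu ∈ (fun w => v i + w) '' (W i : Set _),
          ∀ nu' ∈ (fun w => v i + w) '' (W i : Set _),
          nu - nu' ∈ LinearMap.range
            (dMap k s t (BExt k s t Tm Sm (e i)) (BExt k s t Tm Sm (e i))) →
          nu = nu') ∧
        -- (B_i, A_i) is strong: every B_i(ν), ν ∈ A_i, is indecomposable
        (∀ nu ∈ (fun w => v i + w) '' (W i : Set _),
          Indec k s t (BExt k s t Tm Sm (e i) + nu)) ∧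
        -- (B_i, A_i) is separating
        (∀ nu ∈ (fun w => v i + w) '' (W i : Set _),
          ∀ nu' ∈ (fun w => v i + w) '' (W i : Set _),
          RIso k s t (BExt k s t Tm Sm (e i) + nu) (BExt k s t Tm Sm (e i) + nu') →
          nu = nu') ∧
        -- mosaic: B_i(ν) ≅ B_j(ν') implies i = j
        (∀ j : Fin n, ∀ nu ∈ (fun w => v i + w) '' (W i : Set _),
          ∀ nu' ∈ (fun w => v j + w) '' (W j : Set _),
          RIso k s t (BExt k s t Tm Sm (e i) + nu) (BExt k s t Tm Sm (e j) + nu') →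
          i = j) := by
  have hEndT : EndTrivial k s t Tm := by simpa using hSchurT 0 UT.zero_mem
  have hEndS : EndTrivial k s t Sm := by simpa using hSchurS 0 US.zero_mem
  have hHom₀ : HomZero k s t Tm Sm := by simpa using hHom 0 US.zero_mem 0 UT.zero_mem
  have he : LinearIndependent k ((LinearMap.range (dMap k s t Sm Tm)).mkQ ∘ e) := by
    have h := (hbasis 0 US.zero_mem 0 UT.zero_mem).1
    rwa [add_zero, add_zero] at h
  have : ∀ q, Finite (ιS q) := fun q => Module.Finite.finite_basis (BasS q)
  have : ∀ q, Finite (ιT q) := fun q => Module.Finite.finite_basis (BasT q)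
  refine ⟨fun i => (Submodule.span k (e '' Set.Iio i)).map blockUpperRight, 0, fun i => ?_⟩
  simp only [Pi.zero_apply, zero_add, Set.image_id', Submodule.map_coe, Set.forall_mem_image]
  obtain ⟨a0, b', b, hei⟩ := hstd i
  refine ⟨⟨?_, _, _, isTreeBasis_BExt hTtree.2 hStree.2 ?_⟩, ?_,
    fun g hg g' hg' h => congrArg _ (eq_of_sub_mem_range_dMap_BExt hHom₀ hEndT hEndS he hg hg' h),
    fun g hg => indec_BExt_add_blockUpperRight hHom₀ hEndT hEndS he hTtree.1.1 hg,
    fun g hg g' hg' h => ?_, fun j g hg g' hg' h => ?_⟩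
  · simpa using indec_BExt_add_blockUpperRight hHom₀ hEndT hEndS he hTtree.1.1
      (Submodule.zero_mem _) (i := i)
  · rw [hei, coeffSupport_stdVec, Set.ncard_singleton]
  · rw [← LinearEquiv.finrank_eq (Submodule.equivMapOfInjective _ blockUpperRight_injective _),
      finrank_span_image_Iio (he.of_comp _)]
  · rw [(eq_and_eq_of_rIso_BExt_add_blockUpperRight hHom₀ hEndT hEndS he hTtree.1.1 hStree.1.1
      hg hg' h).2]
  · exact (eq_and_eq_of_rIso_BExt_add_blockUpperRight hHom₀ hEndT hEndS he hTtree.1.1 hStree.1.1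
      hg hg' h).1

end Tree
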